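/- arXiv:2206.02166 — 5 statements merged into one kernel-verified Lean document; each statement's English description precedes it below -/
import Mathlib

section
/- Triangle-inequality framework lemma: Let (S, dist) be a metric space, and let (P_t)_{t≥0} and (Q_t)_{t≥0} be families of maps from S to S such that Q_{s+t} = Q_t ∘ Q_s for all s, t ≥ 0. Suppose there are a point π ∈ S and constants C, β > 0 such that dist(P_t(μ), π) ≤ C e^{−β t} · dist(μ, π) for all μ ∈ S and all t ≥ 0, and suppose that for every T > 0 there is a constant ε(T) ≥ 0 such that dist(Q_t(μ), P_t(μ)) ≤ ε(T) for all μ ∈ S and all 0 ≤ t ≤ T. Then there exist constants T₀ > 0 and λ > 0, depending only on C and β, such that for every ν ∈ S and every t ≥ 0, dist(Q_t(ν), π) ≤ 2 ε(T₀) + 2 M₀ e^{−λ t}, where M₀ = sup_{s ∈ [0, T₀]} dist(Q_s(ν), π) (this supremum is finite under the stated hypotheses). -/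
/-!
Choose a horizon `T` at which `P` halves distances to `π`: `C e^{-βT} ≤ 1/2`. By the triangle
inequality through `P_T μ`, one step of length `T` of `Q` maps distance `d` to at most
`ε(T) + d / 2`, and the semigroup property lets these steps be chained. Starting from the bound
`M₀` on `[0, T]`, the distance therefore decays like `2 ε(T) + 2 M₀ 2^{-t/T}`.
-/

open Set

section

open Real

lemma exists_pos_mul_exp_neg_le_half (C : ℝ) {β : ℝ} (hβ : 0 < β) :
    ∃ T > 0, C * exp (-β * T) ≤ 1 / 2 := by
  have hpos : 0 < 2 * (|C| + 1) := by positivity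
  refine ⟨log (2 * (|C| + 1)) / β, div_pos (log_pos (by linarith [abs_nonneg C])) hβ, ?_⟩
  rw [neg_mul, mul_div_cancel₀ _ hβ.ne', exp_neg, exp_log hpos, ← div_eq_mul_inv,
    div_le_iff₀ hpos]
  linarith [le_abs_self C]

lemma forall_nonneg_of_Icc_of_step {p : ℝ → Prop} {T : ℝ} (hT : 0 < T)
    (base : ∀ t ∈ Icc 0 T, p t) (step : ∀ t, T ≤ t → p (t - T) → p t) :
    ∀ t, 0 ≤ t → p t := by
  have hn : ∀ n : ℕ, ∀ t, 0 ≤ t → t ≤ (n + 1) * T → p t := by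
    intro n
    induction n with
    | zero => exact fun t h0 hT' => base t ⟨h0, by simpa using hT'⟩
    | succ n ih =>
      intro t h0 ht
      rcases le_total t T with hle | hge
      · exact base t ⟨h0, hle⟩
      · refine step t hge (ih _ (sub_nonneg.2 hge) ?_)
        push_cast at ht
        linarith
  intro t ht
  obtain ⟨n, hn'⟩ := exists_nat_ge (t / T)
  refine hn n t ht ?_
  rw [div_le_iff₀ hT] at hn'
  linarith

lemma le_of_halving_step {f : ℝ → ℝ} {T E M : ℝ} (hT : 0 < T) (hE : 0 ≤ E) (hM : 0 ≤ M)
    (base : ∀ t ∈ Icc 0 T, f t ≤ M) (step : ∀ t, T ≤ t → f t ≤ E + f (t - T) / 2) :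
    ∀ t, 0 ≤ t → f t ≤ 2 * E + 2 * M * exp (-(log 2 / T) * t) := by
  refine forall_nonneg_of_Icc_of_step hT (fun t ht => ?_) (fun t htT ih => ?_)
  · have hhalf : 1 / 2 ≤ exp (-(log 2 / T) * t) := by
      rw [← inv_eq_one_div, ← exp_log two_pos, ← exp_neg, exp_le_exp, exp_log two_pos,
        neg_mul, neg_le_neg_iff, div_mul_eq_mul_div, div_le_iff₀ hT]
      exact mul_le_mul_of_nonneg_left ht.2 (log_nonneg one_le_two)
    nlinarith [base t ht]
  · have hshift : exp (-(log 2 / T) * (t - T)) = 2 * exp (-(log 2 / T) * t) := by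
      rw [show -(log 2 / T) * (t - T) = log 2 + -(log 2 / T) * t by field_simp; ring,
        exp_add, exp_log two_pos]
    calc f t ≤ E + f (t - T) / 2 := step t htT
      _ ≤ E + (2 * E + 2 * M * exp (-(log 2 / T) * (t - T))) / 2 := by gcongr
      _ = 2 * E + 2 * M * exp (-(log 2 / T) * t) := by rw [hshift]; ring

end

section

variable {S : Type*} [PseudoMetricSpace S] {P Q : ℝ → S → S} {π : S} {C β E T : ℝ}

lemma dist_le_add_mul_exp_mul_dist
    (hP : ∀ μ t, 0 ≤ t → dist (P t μ) π ≤ C * Real.exp (-β * t) * dist μ π)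
    (hQP : ∀ μ t, 0 ≤ t → t ≤ T → dist (Q t μ) (P t μ) ≤ E) {μ : S} {t : ℝ}
    (ht : 0 ≤ t) (htT : t ≤ T) : dist (Q t μ) π ≤ E + C * Real.exp (-β * t) * dist μ π :=
  (dist_triangle _ (P t μ) _).trans (add_le_add (hQP μ t ht htT) (hP μ t ht))

lemma bddAbove_range_dist_Icc (hβ : 0 ≤ β)
    (hP : ∀ μ t, 0 ≤ t → dist (P t μ) π ≤ C * Real.exp (-β * t) * dist μ π)
    (hQP : ∀ μ t, 0 ≤ t → t ≤ T → dist (Q t μ) (P t μ) ≤ E) (μ : S) :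
    BddAbove (range fun s : Icc (0 : ℝ) T => dist (Q s μ) π) := by
  refine ⟨E + |C| * dist μ π, ?_⟩
  rintro _ ⟨⟨s, hs0, hsT⟩, rfl⟩
  have hexp : Real.exp (-β * s) ≤ 1 := Real.exp_le_one_iff.2 (by nlinarith)
  refine (dist_le_add_mul_exp_mul_dist hP hQP hs0 hsT).trans (add_le_add_right ?_ _)
  calc C * Real.exp (-β * s) * dist μ π ≤ |C| * 1 * dist μ π := by
        gcongr
        exact le_abs_self C
    _ = |C| * dist μ π := by ring

end

theorem triangle_inequality_framework_general (C β : ℝ) (hβ : 0 < β) :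
    ∃ T₀ > (0 : ℝ), ∃ lam > (0 : ℝ),
      ∀ (S : Type*) [MetricSpace S] (P Q : ℝ → S → S) (π : S) (ε : ℝ → ℝ),
        (∀ s t : ℝ, 0 ≤ s → 0 ≤ t → Q (s + t) = Q t ∘ Q s) →
        (∀ (μ : S) (t : ℝ), 0 ≤ t → dist (P t μ) π ≤ C * Real.exp (-β * t) * dist μ π) →
        (∀ T : ℝ, 0 < T →
          0 ≤ ε T ∧ ∀ (μ : S) (t : ℝ), 0 ≤ t → t ≤ T → dist (Q t μ) (P t μ) ≤ ε T) →
        ∀ (ν : S) (t : ℝ), 0 ≤ t →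
          dist (Q t ν) π ≤
            2 * ε T₀ + 2 * (⨆ s : Set.Icc (0 : ℝ) T₀, dist (Q s ν) π) * Real.exp (-lam * t) := by
  obtain ⟨T, hT, hhalf⟩ := exists_pos_mul_exp_neg_le_half C hβ
  refine ⟨T, hT, Real.log 2 / T, div_pos (Real.log_pos one_lt_two) hT, ?_⟩
  intro S _ P Q π ε hQ hP hε ν
  obtain ⟨hE, hQP⟩ := hε T hT
  have hbase : ∀ s ∈ Icc 0 T, dist (Q s ν) π ≤ ⨆ s : Icc (0 : ℝ) T, dist (Q s ν) π :=
    fun s hs => le_ciSup (bddAbove_range_dist_Icc hβ.le hP hQP ν) (⟨s, hs⟩ : Icc (0 : ℝ) T)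
  refine le_of_halving_step hT hE (dist_nonneg.trans (hbase 0 ⟨le_rfl, hT.le⟩)) hbase ?_
  intro t htT
  rw [← sub_add_cancel t T, hQ (t - T) T (sub_nonneg.2 htT) hT.le, sub_add_cancel,
    Function.comp_apply]
  calc dist (Q T (Q (t - T) ν)) π ≤ ε T + C * Real.exp (-β * T) * dist (Q (t - T) ν) π :=
        dist_le_add_mul_exp_mul_dist hP hQP hT.le le_rfl
    _ ≤ ε T + 1 / 2 * dist (Q (t - T) ν) π := by gcongr
    _ = ε T + dist (Q (t - T) ν) π / 2 := by ring

/-- **Triangle-inequality framework lemma.**  If `P` is geometrically ergodic towards `π`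
with constants `C, β`, and `Q` is a semigroup-like family of maps that stays within `ε(T)`
of `P` on every finite time horizon `[0, T]`, then there are `T₀, λ > 0`, depending only on
`C` and `β`, such that `dist (Q t ν) π ≤ 2 ε(T₀) + 2 M₀ e^{−λ t}` for all `ν` and `t ≥ 0`,
where `M₀ = sup_{s ∈ [0, T₀]} dist (Q s ν) π`. -/
theorem triangle_inequality_framework (C β : ℝ) (hC : 0 < C) (hβ : 0 < β) :
    ∃ T₀ > (0 : ℝ), ∃ lam > (0 : ℝ),
      ∀ (S : Type*) [MetricSpace S] (P Q : ℝ → S → S) (π : S) (ε : ℝ → ℝ),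
        (∀ s t : ℝ, 0 ≤ s → 0 ≤ t → Q (s + t) = Q t ∘ Q s) →
        (∀ (μ : S) (t : ℝ), 0 ≤ t → dist (P t μ) π ≤ C * Real.exp (-β * t) * dist μ π) →
        (∀ T : ℝ, 0 < T →
          0 ≤ ε T ∧ ∀ (μ : S) (t : ℝ), 0 ≤ t → t ≤ T → dist (Q t μ) (P t μ) ≤ ε T) →
        ∀ (ν : S) (t : ℝ), 0 ≤ t →
          dist (Q t ν) π ≤
            2 * ε T₀ + 2 * (⨆ s : Set.Icc (0 : ℝ) T₀, dist (Q s ν) π) * Real.exp (-lam * t) :=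
  triangle_inequality_framework_general C β hβ
end

section
/- Difference of invariant points via the triangle inequality: Let (S, dist) be a metric space, and let (P_t)_{t≥0} and (Q_t)_{t≥0} be families of maps from S to S. Suppose π ∈ S satisfies P_t(π) = π for all t ≥ 0 and π̃ ∈ S satisfies Q_t(π̃) = π̃ for all t ≥ 0; suppose there are constants C, β > 0 such that dist(P_t(μ), π) ≤ C e^{−β t} · dist(μ, π) for all μ ∈ S and t ≥ 0; and suppose that for a given T > 0 there is ε(T) ≥ 0 with dist(P_t(μ), Q_t(μ)) ≤ ε(T) for all μ ∈ S and all 0 ≤ t ≤ T. Then for every T > 0 such that C e^{−β T} ≤ 1/2, one has dist(π, π̃) ≤ 2 ε(T). -/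
/-- **Difference of invariant points via the triangle inequality.**  If `π` is invariant
for `P`, `π̃` is invariant for `Q`, `P` is geometrically ergodic towards `π` with constants
`C, β`, and `dist (P t μ) (Q t μ) ≤ ε` for all `μ` and all `0 ≤ t ≤ T`, then whenever
`C e^{−β T} ≤ 1/2` one has `dist π π̃ ≤ 2 ε`. -/
theorem invariant_distribution_difference {S : Type*} [MetricSpace S]
    (P Q : ℝ → S → S) (π πt : S) (C β T ε : ℝ)
    (hC : 0 < C) (hβ : 0 < β) (hT : 0 < T) (hε : 0 ≤ ε)
    (hπ : ∀ t : ℝ, 0 ≤ t → P t π = π)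
    (hπt : ∀ t : ℝ, 0 ≤ t → Q t πt = πt)
    (hErg : ∀ (μ : S) (t : ℝ), 0 ≤ t → dist (P t μ) π ≤ C * Real.exp (-β * t) * dist μ π)
    (hFin : ∀ (μ : S) (t : ℝ), 0 ≤ t → t ≤ T → dist (P t μ) (Q t μ) ≤ ε)
    (hcontr : C * Real.exp (-β * T) ≤ 1 / 2) :
    dist π πt ≤ 2 * ε := by
  have h1 : dist π πt ≤ dist (P T πt) π + dist (P T πt) (Q T πt) := by
    rw [hπt T hT.le]
    calc dist π πt ≤ dist π (P T πt) + dist (P T πt) πt := dist_triangle _ _ _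
    _ = dist (P T πt) π + dist (P T πt) πt := by rw [dist_comm]
  rw [hπt T hT.le] at h1
  have h2 := hErg πt T hT.le
  have h3 := hFin πt T hT.le le_rfl
  rw [hπt T hT.le] at h3
  have h4 : dist (P T πt) π ≤ (1/2) * dist πt π :=
    h2.trans (mul_le_mul_of_nonneg_right hcontr dist_nonneg)
  rw [dist_comm πt π] at h4
  linarith
end

section
/- Fourth-moment one-step contraction for the Euler map: Let b : ℝ^d → ℝ^d satisfy the linear growth bound |b(x)| ≤ L₀(|x| + 1) for all x and the dissipation condition −x·b(x) ≥ α|x|² − θ for all x, where L₀, α, θ > 0. Set f(x, τ) = x + b(x)τ and τ₀ = min{α/(2L₀²), 1/(2α)}. Then there exists a constant C = C(α, θ) > 0 such that for every τ with 0 < τ < τ₀ and every x ∈ ℝ^d, |f(x, τ)|⁴ ≤ (1 − ατ)|x|⁴ + Cτ. -/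
/-- **Fourth-moment one-step contraction for the Euler map.**  If `b` has linear growth
`‖b x‖ ≤ L₀(‖x‖+1)` and satisfies the dissipation condition `−⟨x, b x⟩ ≥ α‖x‖² − θ`, then
there is `C = C(α, θ) > 0` such that for every step size `0 < τ < min{α/(2L₀²), 1/(2α)}`,
`‖x + τ b(x)‖⁴ ≤ (1 − ατ)‖x‖⁴ + Cτ`. -/
theorem euler_fourth_moment_contraction (α θ : ℝ) (hα : 0 < α) (hθ : 0 < θ) :
    ∃ C > (0 : ℝ), ∀ (d : ℕ) (L₀ : ℝ), 0 < L₀ →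
      ∀ b : EuclideanSpace ℝ (Fin d) → EuclideanSpace ℝ (Fin d),
        (∀ x, ‖b x‖ ≤ L₀ * (‖x‖ + 1)) →
        (∀ x, α * ‖x‖ ^ 2 - θ ≤ -(inner ℝ x (b x) : ℝ)) →
        ∀ τ : ℝ, 0 < τ → τ < min (α / (2 * L₀ ^ 2)) (1 / (2 * α)) →
          ∀ x, ‖x + τ • b x‖ ^ 4 ≤ (1 - α * τ) * ‖x‖ ^ 4 + C * τ := by
  refine ⟨3 * (2 * θ + α) ^ 2 / (2 * α), by positivity, ?_⟩
  intro d L₀ hL b hgrow hdiss τ hτ hτlt x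
  set K := 2 * θ + α with hK
  have hK0 : 0 < K := by positivity
  have hτ1 : τ < α / (2 * L₀ ^ 2) := lt_of_lt_of_le hτlt (min_le_left _ _)
  have hτ2 : τ < 1 / (2 * α) := lt_of_lt_of_le hτlt (min_le_right _ _)
  have h1 : 2 * L₀ ^ 2 * τ < α := by
    rw [lt_div_iff₀ (by positivity)] at hτ1; linarith [hτ1]
  have h2 : α * τ < 1 / 2 := by
    rw [lt_div_iff₀ (by positivity)] at hτ2; linarith [hτ2]
  -- second moment bound
  have hA : ‖x + τ • b x‖ ^ 2 ≤ (1 - α * τ) * ‖x‖ ^ 2 + K * τ := by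
    have hexp : ‖x + τ • b x‖ ^ 2
        = ‖x‖ ^ 2 + 2 * (τ * (inner ℝ x (b x) : ℝ)) + τ ^ 2 * ‖b x‖ ^ 2 := by
      rw [norm_add_sq_real, real_inner_smul_right, norm_smul, Real.norm_eq_abs,
        abs_of_pos hτ, mul_pow]
    rw [hexp]
    have hd := hdiss x
    have hg := hgrow x
    have hb0 : 0 ≤ ‖b x‖ := norm_nonneg _
    have hx0 : 0 ≤ ‖x‖ := norm_nonneg _
    have hb2 : ‖b x‖ ^ 2 ≤ 2 * L₀ ^ 2 * (‖x‖ ^ 2 + 1) := by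
      nlinarith [sq_nonneg (‖x‖ - 1), sq_nonneg (L₀ * (‖x‖ + 1))]
    nlinarith [mul_le_mul_of_nonneg_left hb2 (sq_nonneg τ),
      mul_pos hτ hτ, mul_nonneg (le_of_lt hτ) (sq_nonneg ‖x‖)]
  have hA0 : 0 ≤ ‖x + τ • b x‖ ^ 2 := sq_nonneg _
  set t := ‖x‖ ^ 2 with ht
  have ht0 : 0 ≤ t := sq_nonneg _
  have h4 : ‖x + τ • b x‖ ^ 4 ≤ ((1 - α * τ) * t + K * τ) ^ 2 := by
    have : ‖x + τ • b x‖ ^ 4 = (‖x + τ • b x‖ ^ 2) ^ 2 := by ring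
    rw [this]
    exact pow_le_pow_left₀ hA0 hA 2
  have hx4 : ‖x‖ ^ 4 = t ^ 2 := by ring
  rw [hx4]
  refine h4.trans ?_
  -- ((1-ατ)t + Kτ)² ≤ (1-ατ)t² + Cτ
  have key : ((1 - α * τ) * t + K * τ) ^ 2 ≤ (1 - α * τ) * t ^ 2 + (3 * K ^ 2 / (2 * α)) * τ := by
    have hone : 0 < 1 - α * τ := by linarith
    have hAM' : 2 * α * K * t ≤ α ^ 2 * t ^ 2 + K ^ 2 := by
      nlinarith [sq_nonneg (α * t - K)]
    have h2α : (0 : ℝ) < 2 * α := by positivity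
    have key2 : 2 * α * (((1 - α * τ) * t + K * τ) ^ 2)
        ≤ 2 * α * ((1 - α * τ) * t ^ 2) + 3 * K ^ 2 * τ := by
      nlinarith [mul_le_mul_of_nonneg_left hAM'
          (mul_nonneg (by linarith : (0:ℝ) ≤ 2 * (1 - α * τ)) hτ.le),
        mul_pos (mul_pos hK0 hK0) hτ, sq_nonneg (K * τ)]
    calc ((1 - α * τ) * t + K * τ) ^ 2
        = (2 * α * (((1 - α * τ) * t + K * τ) ^ 2)) / (2 * α) := by
          field_simp
      _ ≤ (2 * α * ((1 - α * τ) * t ^ 2) + 3 * K ^ 2 * τ) / (2 * α) := by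
          gcongr
      _ = (1 - α * τ) * t ^ 2 + (3 * K ^ 2 / (2 * α)) * τ := by
          field_simp
  refine key.trans ?_
  have : 3 * K ^ 2 / (2 * α) = 3 * (2 * θ + α) ^ 2 / (2 * α) := by rw [hK]
  rw [this]
end

section
/- Second-moment one-step contraction for the Euler map: Let b : ℝ^d → ℝ^d satisfy the linear growth bound |b(x)| ≤ L₀(|x| + 1) for all x and the dissipation condition −x·b(x) ≥ α|x|² − θ for all x, where L₀, α, θ > 0. Then for every τ with 0 < τ < α/(2L₀²) and every x ∈ ℝ^d, |x + b(x)τ|² ≤ (1 − ατ)|x|² + (α + 2θ)τ. -/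
/-- **Second-moment one-step contraction for the Euler map.**  If `b` has linear growth
`‖b x‖ ≤ L₀(‖x‖+1)` and satisfies the dissipation condition `−⟨x, b x⟩ ≥ α‖x‖² − θ`, then
for every step size `0 < τ < α/(2L₀²)`, `‖x + τ b(x)‖² ≤ (1 − ατ)‖x‖² + (α + 2θ)τ`. -/
theorem euler_second_moment_contraction (d : ℕ) (α θ L₀ : ℝ)
    (hα : 0 < α) (hθ : 0 < θ) (hL₀ : 0 < L₀)
    (b : EuclideanSpace ℝ (Fin d) → EuclideanSpace ℝ (Fin d))
    (hb : ∀ x, ‖b x‖ ≤ L₀ * (‖x‖ + 1))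
    (hdiss : ∀ x, α * ‖x‖ ^ 2 - θ ≤ -(inner ℝ x (b x) : ℝ))
    (τ : ℝ) (hτ0 : 0 < τ) (hτ : τ < α / (2 * L₀ ^ 2)) :
    ∀ x, ‖x + τ • b x‖ ^ 2 ≤ (1 - α * τ) * ‖x‖ ^ 2 + (α + 2 * θ) * τ := by
  intro x
  have hexp : ‖x + τ • b x‖ ^ 2
      = ‖x‖ ^ 2 + 2 * (τ * (inner ℝ x (b x) : ℝ)) + τ ^ 2 * ‖b x‖ ^ 2 := by
    rw [norm_add_sq_real, real_inner_smul_right, norm_smul]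
    simp [abs_of_pos hτ0, mul_pow]
  have h1 := hdiss x
  have h2 := hb x
  have h3 : ‖b x‖ ^ 2 ≤ 2 * L₀ ^ 2 * (‖x‖ ^ 2 + 1) := by
    have hx : (0:ℝ) ≤ ‖x‖ := norm_nonneg _
    nlinarith [norm_nonneg (b x), sq_nonneg (‖x‖ - 1)]
  have hτ' : 2 * L₀ ^ 2 * τ < α := by
    rw [lt_div_iff₀ (by positivity)] at hτ
    nlinarith
  have hx : (0:ℝ) ≤ ‖x‖ ^ 2 := by positivity
  rw [hexp]
  nlinarith [mul_lt_mul_of_pos_left hτ' hτ0, sq_nonneg τ]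
end

section
/- Existence of the concave comparison function for the reflection coupling: Let κ : (0, ∞) → ℝ be continuous, bounded from below, and asymptotically positive in the sense that liminf_{r→∞} κ(r) > 0. Then there exist a function f : [0, ∞) → [0, ∞) and constants c₀ > 0 and φ₀ > 0 such that: (1) f(0) = 0 and f is concave and strictly increasing on [0, ∞); (2) f is twice continuously differentiable on [0, ∞) and f''(r) − (1/4) r κ(r) f'(r) ≤ −(c₀/2) f(r) for all r > 0; (3) (φ₀/4) r ≤ f(r) ≤ r for all r ≥ 0. -/
/-!
Take `f(r) = ((1 - e^{-ar}) / a + ε r) / (1 + ε)`, which is concave, increasing and squeezed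
between `ε r / (1 + ε)` and `r`. Let `κ ≥ -M` on `(0, ∞)` and `κ ≥ δ > 0` on `[R, ∞)`.
For `r ≤ R` the choice `a = M R / 4 + 1` makes the curvature `f'' ∝ -a e^{-ar} ≤ -a e^{-aR}`
beat the drift `-(1/4) r κ f' ≤ (M R / 4) f'`, leaving a margin that controls `c f` on the
bounded interval `[0, R]`; the linear part `ε r` must be small enough not to spoil this.
For `r ≥ R` the drift term is at most `-(δ ε / 4) r`, and grows linearly like `f` itself.
-/

open Real Filter Set

noncomputable def expProfile (a ε r : ℝ) : ℝ := (1 - exp (-(a * r))) / a + ε * r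

section expProfile

variable {a ε r : ℝ}

@[simp] lemma expProfile_zero : expProfile a ε 0 = 0 := by simp [expProfile]

lemma hasDerivAt_exp_neg_mul (a r : ℝ) :
    HasDerivAt (fun x => exp (-(a * x))) (-(a * exp (-(a * r)))) r := by
  simpa [mul_comm] using ((hasDerivAt_id r).const_mul a).neg.exp

lemma hasDerivAt_expProfile (ha : a ≠ 0) :
    HasDerivAt (expProfile a ε) (exp (-(a * r)) + ε) r := by
  have h := (((hasDerivAt_exp_neg_mul a r).const_sub 1).div_const a).add
    ((hasDerivAt_id' r).const_mul ε)
  refine h.congr_deriv ?_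
  field_simp

lemma strictMono_expProfile (ha : 0 < a) (hε : 0 ≤ ε) : StrictMono (expProfile a ε) :=
  strictMono_of_deriv_pos fun r => by
    rw [(hasDerivAt_expProfile ha.ne').deriv]
    positivity

lemma concaveOn_expProfile (ha : 0 < a) : ConcaveOn ℝ univ (expProfile a ε) :=
  concaveOn_of_hasDerivWithinAt2_nonpos convex_univ
    (fun _ _ => (hasDerivAt_expProfile ha.ne').continuousAt.continuousWithinAt)
    (fun _ _ => (hasDerivAt_expProfile ha.ne').hasDerivWithinAt)
    (fun r _ => ((hasDerivAt_exp_neg_mul a r).add_const ε).hasDerivWithinAt)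
    (fun r _ => by have := exp_pos (-(a * r)); nlinarith)

lemma mul_le_expProfile (ha : 0 < a) (hr : 0 ≤ r) : ε * r ≤ expProfile a ε r := by
  have : exp (-(a * r)) ≤ 1 := exp_le_one_iff.2 (by nlinarith)
  have : 0 ≤ (1 - exp (-(a * r))) / a := div_nonneg (by linarith) ha.le
  unfold expProfile
  linarith

lemma expProfile_le_one_add_mul (ha : 0 < a) : expProfile a ε r ≤ (1 + ε) * r := by
  have : (1 - exp (-(a * r))) / a ≤ r := by
    rw [div_le_iff₀ ha]
    linarith [one_sub_le_exp_neg (a * r)]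
  unfold expProfile
  linarith

lemma expProfile_le_inv_add (ha : 0 < a) : expProfile a ε r ≤ a⁻¹ + ε * r := by
  have : (1 - exp (-(a * r))) / a ≤ a⁻¹ := by
    rw [div_eq_mul_inv]
    exact mul_le_of_le_one_left (inv_nonneg.2 ha.le) (by linarith [exp_pos (-(a * r))])
  unfold expProfile
  linarith

variable {k M R δ c : ℝ}

lemma expProfile_drift_le_of_le (hr : 0 ≤ r) (hrR : r ≤ R) (hk : -M ≤ k) (hM : 0 ≤ M)
    (ha : M * R / 4 + 1 ≤ a) (hε : 0 ≤ ε) (hc : 0 ≤ c)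
    (hmargin : M * R * ε / 4 + c / 2 * ((1 + ε) * R) ≤ exp (-(a * R))) :
    -(a * exp (-(a * r))) - 1 / 4 * r * k * (exp (-(a * r)) + ε) ≤
      -(c / 2) * expProfile a ε r := by
  have ha0 : 0 < a := by nlinarith [mul_nonneg hM (hr.trans hrR)]
  set E := exp (-(a * r))
  have hE : exp (-(a * R)) ≤ E := exp_le_exp.2 (by nlinarith)
  have hE0 : 0 < E := exp_pos _
  calc -(a * E) - 1 / 4 * r * k * (E + ε)
      ≤ -(a * E) + 1 / 4 * R * M * (E + ε) := by
        nlinarith [mul_le_mul_of_nonneg_right hk (by positivity : 0 ≤ r * (E + ε)),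
          mul_le_mul_of_nonneg_right hrR (by positivity : 0 ≤ M * (E + ε))]
    _ ≤ -exp (-(a * R)) + M * R * ε / 4 := by nlinarith
    _ ≤ -(c / 2) * ((1 + ε) * R) := by linarith
    _ ≤ -(c / 2) * expProfile a ε r := by
        refine mul_le_mul_of_nonpos_left ((expProfile_le_one_add_mul ha0).trans ?_) (by linarith)
        gcongr

lemma expProfile_drift_le_of_ge (hRr : R ≤ r) (hk : δ ≤ k) (hδ : 0 ≤ δ) (hR : 0 ≤ R)
    (ha : 1 ≤ a) (hε : 0 ≤ ε) (hc : 0 ≤ c) (hcδ : c ≤ δ / 4) (hcR : c ≤ δ * ε * R / 4) :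
    -(a * exp (-(a * r))) - 1 / 4 * r * k * (exp (-(a * r)) + ε) ≤
      -(c / 2) * expProfile a ε r := by
  set E := exp (-(a * r))
  have hE0 : 0 < E := exp_pos _
  have hr : 0 ≤ r := hR.trans hRr
  calc -(a * E) - 1 / 4 * r * k * (E + ε)
      ≤ -(δ * ε * r / 4) := by
        nlinarith [mul_le_mul_of_nonneg_right hk (by positivity : 0 ≤ r * (E + ε)),
          mul_nonneg hδ (mul_nonneg hr hE0.le)]
    _ ≤ -(c / 2) * (1 + ε * r) := by
        nlinarith [mul_le_mul_of_nonneg_right hcδ (mul_nonneg hε hr),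
          mul_le_mul_of_nonneg_left hRr (mul_nonneg hδ hε)]
    _ ≤ -(c / 2) * expProfile a ε r := by
        refine mul_le_mul_of_nonpos_left ((expProfile_le_inv_add (by linarith)).trans ?_)
          (by linarith)
        gcongr
        exact inv_le_one_of_one_le₀ ha

lemma exists_expProfile_drift_le (hM : 0 ≤ M) (hR : 0 < R) (hδ : 0 < δ) :
    ∃ a ε c : ℝ, 0 < a ∧ 0 < ε ∧ 0 < c ∧
      ∀ r k : ℝ, 0 ≤ r → (r ≤ R → -M ≤ k) → (R ≤ r → δ ≤ k) →
        -(a * exp (-(a * r))) - 1 / 4 * r * k * (exp (-(a * r)) + ε) ≤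
          -(c / 2) * expProfile a ε r := by
  have hMR : 0 ≤ M * R := mul_nonneg hM hR.le
  set a := M * R / 4 + 1
  set η := exp (-(a * R))
  set ε := η / (M * R + 1)
  set c := min (η / (2 * R)) (min (δ / 4) (δ * ε * R / 4))
  have ha : 1 ≤ a := le_add_of_nonneg_left (by positivity)
  have hη : 0 < η := exp_pos _
  have hε : 0 < ε := by positivity
  have hε1 : ε ≤ 1 := by
    refine div_le_one_of_le₀ (exp_le_one_iff.2 ?_ |>.trans ?_) (by positivity) <;> nlinarith
  have hMRε : M * R * ε ≤ η := by
    have : ε * (M * R + 1) = η := div_mul_cancel₀ _ (by positivity)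
    nlinarith
  have hc : 0 < c := by positivity
  refine ⟨a, ε, c, by linarith, hε, hc, fun r k hr hkM hkδ => ?_⟩
  rcases le_total r R with hrR | hRr
  · refine expProfile_drift_le_of_le hr hrR (hkM hrR) hM le_rfl hε.le hc.le ?_
    have : c * (2 * R) ≤ η := (le_div_iff₀ (by positivity)).1 (min_le_left _ _)
    nlinarith
  · exact expProfile_drift_le_of_ge hRr (hkδ hRr) hδ.le hR.le ha hε.le hc.le
      ((min_le_right _ _).trans (min_le_left _ _)) ((min_le_right _ _).trans (min_le_right _ _))

end expProfile

lemma exists_nonneg_forall_neg_le_of_bddBelow_image {α : Type*} {f : α → ℝ} {s : Set α}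
    (h : BddBelow (f '' s)) : ∃ M, 0 ≤ M ∧ ∀ x ∈ s, -M ≤ f x := by
  obtain ⟨m, hm⟩ := h
  exact ⟨max 0 (-m), le_max_left _ _, fun x hx =>
    neg_le.1 ((le_max_right _ _).trans' (neg_le_neg (hm ⟨x, hx, rfl⟩)))⟩

lemma exists_pos_forall_ge_le_of_liminf_pos {f : ℝ → ℝ} (h : 0 < liminf f atTop) :
    ∃ δ > 0, ∃ R > 0, ∀ r, R ≤ r → δ ≤ f r := by
  -- in `ℝ` the liminf of a function unbounded below is the junk value `sSup ∅ = 0`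
  have hf : IsBoundedUnder (· ≥ ·) atTop f := by
    by_contra hf
    simp [Real.liminf_of_not_isBoundedUnder hf] at h
  obtain ⟨R, hR⟩ := eventually_atTop.1
    ((eventually_lt_of_lt_liminf (half_lt_self h) hf).and (eventually_gt_atTop 0))
  exact ⟨_, half_pos h, R, (hR R le_rfl).2, fun r hr => (hR r hr).1.le⟩

theorem exists_reflection_coupling_comparison_function_general (κ : ℝ → ℝ)
    (hbdd : BddBelow (κ '' Set.Ioi 0))
    (hliminf : 0 < Filter.liminf κ Filter.atTop) :
    ∃ (f f' f'' : ℝ → ℝ) (c₀ φ₀ : ℝ), 0 < c₀ ∧ 0 < φ₀ ∧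
      f 0 = 0 ∧
      StrictMonoOn f (Set.Ici 0) ∧
      ConcaveOn ℝ (Set.Ici 0) f ∧
      (∀ r ∈ Set.Ici (0 : ℝ), HasDerivWithinAt f (f' r) (Set.Ici 0) r) ∧
      (∀ r ∈ Set.Ici (0 : ℝ), HasDerivWithinAt f' (f'' r) (Set.Ici 0) r) ∧
      ContinuousOn f'' (Set.Ici 0) ∧
      (∀ r : ℝ, 0 < r → f'' r - 1 / 4 * r * κ r * f' r ≤ -(c₀ / 2) * f r) ∧
      (∀ r : ℝ, 0 ≤ r → φ₀ / 4 * r ≤ f r ∧ f r ≤ r) := by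
  obtain ⟨M, hM, hκM⟩ := exists_nonneg_forall_neg_le_of_bddBelow_image hbdd
  obtain ⟨δ, hδ, R, hR, hκδ⟩ := exists_pos_forall_ge_le_of_liminf_pos hliminf
  obtain ⟨a, ε, c, ha, hε, hc, hdrift⟩ := exists_expProfile_drift_le hM hR hδ
  set β := (1 + ε)⁻¹
  have hβ : 0 < β := by positivity
  refine ⟨fun r => β * expProfile a ε r, fun r => β * (exp (-(a * r)) + ε),
    fun r => β * -(a * exp (-(a * r))), c, 4 * (β * ε), hc, by positivity, by simp,
    ((strictMono_expProfile ha hε.le).const_mul hβ).strictMonoOn _,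
    ((concaveOn_expProfile ha).smul hβ.le).subset (subset_univ _) (convex_Ici 0),
    fun r _ => ((hasDerivAt_expProfile ha.ne').const_mul β).hasDerivWithinAt,
    fun r _ => (((hasDerivAt_exp_neg_mul a r).add_const ε).const_mul β).hasDerivWithinAt,
    by fun_prop, fun r hr => ?_, fun r hr => ⟨?_, ?_⟩⟩
  · have := mul_le_mul_of_nonneg_left
      (hdrift r (κ r) hr.le (fun _ => hκM r hr) (hκδ r)) hβ.le
    linarith
  · have := mul_le_mul_of_nonneg_left (mul_le_expProfile (ε := ε) ha hr) hβ.le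
    linarith
  · calc β * expProfile a ε r ≤ β * ((1 + ε) * r) :=
          mul_le_mul_of_nonneg_left (expProfile_le_one_add_mul ha) hβ.le
      _ = r := by rw [← mul_assoc, inv_mul_cancel₀ (by positivity), one_mul]

/-- **Existence of the concave comparison function for the reflection coupling.**
If `κ : (0,∞) → ℝ` is continuous, bounded from below and has `liminf_{r→∞} κ(r) > 0`,
then there exist a function `f : [0,∞) → [0,∞)` (given with its first and second
derivatives `f'`, `f''` on `[0,∞)`) and constants `c₀, φ₀ > 0` such that `f(0) = 0`,
`f` is concave and strictly increasing on `[0,∞)`, `f` is twice continuously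
differentiable on `[0,∞)`, `f''(r) − (1/4) r κ(r) f'(r) ≤ −(c₀/2) f(r)` for all `r > 0`,
and `(φ₀/4) r ≤ f(r) ≤ r` for all `r ≥ 0`. -/
theorem exists_reflection_coupling_comparison_function (κ : ℝ → ℝ)
    (hcont : ContinuousOn κ (Set.Ioi 0))
    (hbdd : BddBelow (κ '' Set.Ioi 0))
    (hliminf : 0 < Filter.liminf κ Filter.atTop) :
    ∃ (f f' f'' : ℝ → ℝ) (c₀ φ₀ : ℝ), 0 < c₀ ∧ 0 < φ₀ ∧
      f 0 = 0 ∧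
      StrictMonoOn f (Set.Ici 0) ∧
      ConcaveOn ℝ (Set.Ici 0) f ∧
      (∀ r ∈ Set.Ici (0 : ℝ), HasDerivWithinAt f (f' r) (Set.Ici 0) r) ∧
      (∀ r ∈ Set.Ici (0 : ℝ), HasDerivWithinAt f' (f'' r) (Set.Ici 0) r) ∧
      ContinuousOn f'' (Set.Ici 0) ∧
      (∀ r : ℝ, 0 < r → f'' r - 1 / 4 * r * κ r * f' r ≤ -(c₀ / 2) * f r) ∧
      (∀ r : ℝ, 0 ≤ r → φ₀ / 4 * r ≤ f r ∧ f r ≤ r) :=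
  exists_reflection_coupling_comparison_function_general κ hbdd hliminf
end
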